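/- arXiv:1411.2577 — 6 statements merged into one kernel-verified Lean document; each statement's English description precedes it below -/
import Mathlib

section
/- Let X be a normed space and suppose the function φ : X → ℝ satisfies: φ(0) = 1, φ(x) ≥ e^{-K‖x‖} for all x ∈ X (K > 0 a constant), and φ(x) = ∫ e^{i⟨x,v⟩} dμ(v) for a probability measure μ on the dual (i.e., φ is the characteristic function of μ). Fix x ∈ X with x ≠ 0 and let ν be the pushforward of μ under v ↦ ⟨x, v⟩. Then for every t > 0, ν({w ∈ ℝ : |w| ≥ t·‖x‖}) ≤ C/t for an absolute constant C (depending only on K). -/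
/-!
For symmetric `μ` the characteristic function is real, so `‖1 - charFun μ (s • x)‖ = 1 - φ (s • x)`,
and the lower bound `φ ≥ exp (-K‖·‖)` makes this at most `K |s| ‖x‖`. Mathlib's truncation
inequality bounds `μ {r < |⟪x, ·⟫|}` by `r / 2` times the integral of `‖1 - charFun μ (s • x)‖`
over `|s| ≤ 2 / r`, hence by `4 K ‖x‖ / r`; take `r = t ‖x‖ / 2`.
-/

open MeasureTheory Complex ComplexConjugate RealInnerProductSpace

namespace MeasureTheory

variable {E : Type*} [NormedAddCommGroup E] [InnerProductSpace ℝ E] [MeasurableSpace E]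
  [BorelSpace E] {μ : Measure E}

lemma re_charFun [IsFiniteMeasure μ] (t : E) :
    (charFun μ t).re = ∫ v, Real.cos ⟪t, v⟫ ∂μ := by
  have hint : Integrable (fun v => exp (⟪v, t⟫ * I)) μ :=
    (BoundedContinuousFunction.innerProbChar t).integrable μ
  rw [charFun_apply, ← RCLike.re_eq_complex_re, ← integral_re hint]
  simp_rw [RCLike.re_eq_complex_re, exp_ofReal_mul_I_re, real_inner_comm]

lemma conj_charFun_of_map_neg_eq (hμ : μ.map (fun v => -v) = μ) (t : E) :
    conj (charFun μ t) = charFun μ t := by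
  rw [← charFun_neg]
  nth_rw 2 [← hμ]
  rw [show (fun v : E => -v) = ((-1 : ℝ) • ·) by ext v; simp, charFun_map_smul, neg_one_smul]

lemma norm_one_sub_charFun_of_map_neg_eq [IsProbabilityMeasure μ]
    (hμ : μ.map (fun v => -v) = μ) (t : E) :
    ‖1 - charFun μ t‖ = 1 - (charFun μ t).re := by
  have hreal : ((charFun μ t).re : ℂ) = charFun μ t :=
    RCLike.conj_eq_iff_re.mp (conj_charFun_of_map_neg_eq hμ t)
  have hre_le : (charFun μ t).re ≤ 1 := (re_le_norm _).trans (norm_charFun_le_one t)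
  rw [← hreal, ← ofReal_one, ← ofReal_sub, norm_real, Real.norm_of_nonneg (by linarith)]
  simp

theorem measureReal_abs_inner_gt_le_of_exp_le_re_charFun [IsProbabilityMeasure μ]
    (hμ : μ.map (fun v => -v) = μ) {a : E} {c : ℝ}
    (hc : ∀ s : ℝ, Real.exp (-(c * |s|)) ≤ (charFun μ (s • a)).re) {r : ℝ} (hr : 0 < r) :
    μ.real {v | r < |⟪a, v⟫|} ≤ 4 * c / r := by
  have hc0 : 0 ≤ c := by
    simpa using (hc 1).trans ((re_le_norm _).trans (norm_charFun_le_one _))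
  have hbound : ∀ s ∈ Set.uIoc (-2 * r⁻¹) (2 * r⁻¹),
      ‖1 - charFun μ (s • a)‖ ≤ c * (2 * r⁻¹) := by
    intro s hs
    have hs' : |s| ≤ 2 * r⁻¹ := by
      rw [Set.uIoc_of_le (by linarith [inv_pos.mpr hr])] at hs
      exact abs_le.mpr ⟨by linarith [hs.1], hs.2⟩
    calc ‖1 - charFun μ (s • a)‖ = 1 - (charFun μ (s • a)).re :=
          norm_one_sub_charFun_of_map_neg_eq hμ _
      _ ≤ c * |s| := by linarith [hc s, Real.add_one_le_exp (-(c * |s|))]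
      _ ≤ c * (2 * r⁻¹) := by gcongr
  calc μ.real {v | r < |⟪a, v⟫|}
      ≤ 2⁻¹ * r * ‖∫ s in -2 * r⁻¹..2 * r⁻¹, 1 - charFun μ (s • a)‖ :=
        measureReal_abs_inner_gt_le_integral_charFun hr
    _ ≤ 2⁻¹ * r * (c * (2 * r⁻¹) * |2 * r⁻¹ - -2 * r⁻¹|) := by
        gcongr
        exact intervalIntegral.norm_integral_le_of_norm_le_const hbound
    _ = 4 * c / r := by
        rw [abs_of_pos (by linarith [inv_pos.mpr hr])]
        field_simp
        ring

end MeasureTheory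

theorem stmt_5 (K : ℝ) (hK : 0 < K) :
    ∃ C : ℝ, 0 < C ∧
      ∀ (d : ℕ) (μ : Measure (EuclideanSpace ℝ (Fin d))),
        IsProbabilityMeasure μ →
        μ.map (fun v => -v) = μ →
        ∀ nrm : EuclideanSpace ℝ (Fin d) → ℝ,
          (∀ (t : ℝ) (y : EuclideanSpace ℝ (Fin d)), nrm (t • y) = |t| * nrm y) →
        ∀ φ : EuclideanSpace ℝ (Fin d) → ℝ,
          (∀ y, φ y = ∫ v, Real.cos (inner ℝ y v : ℝ) ∂μ) →
          (∀ y, Real.exp (-(K * nrm y)) ≤ φ y) →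
        ∀ x : EuclideanSpace ℝ (Fin d), x ≠ 0 → 0 < nrm x →
        ∀ t : ℝ, 0 < t →
          (μ {v | t * nrm x ≤ |(inner ℝ x v : ℝ)|}).toReal ≤ C / t := by
  refine ⟨8 * K, by positivity, ?_⟩
  intro d μ _ hsym nrm hnrm φ hφ hφexp x _ hx t ht
  have hc : ∀ s : ℝ, Real.exp (-(K * nrm x * |s|)) ≤ (charFun μ (s • x)).re := fun s => by
    rw [re_charFun, ← hφ, mul_assoc, mul_comm (nrm x), ← hnrm]
    exact hφexp (s • x)
  have hsub : {v | t * nrm x ≤ |⟪x, v⟫|} ⊆ {v | t * nrm x / 2 < |⟪x, v⟫|} :=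
    fun v hv => (half_lt_self (by positivity : 0 < t * nrm x)).trans_le hv
  calc (μ {v | t * nrm x ≤ |⟪x, v⟫|}).toReal
      ≤ μ.real {v | t * nrm x / 2 < |⟪x, v⟫|} := measureReal_mono hsub
    _ ≤ 4 * (K * nrm x) / (t * nrm x / 2) :=
        measureReal_abs_inner_gt_le_of_exp_le_re_charFun hsym hc (by positivity)
    _ = 8 * K / t := by
        field_simp
        ring
end

section
/- Let S be a set, H a Hilbert space, and f : S → H any map. Then there exists a Hilbert space H' and a map g : S → H' such that ‖g(x₁) - g(x₂)‖_{H'} = ‖f(x₁) - f(x₂)‖_H^{1/2} for all x₁, x₂ ∈ S. -/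
/-!
For a kernel `K` of negative type, `-½ ∑ₓ ∑ᵧ α x β y K x y` is a positive semidefinite inner
product on finitely supported weights of total mass zero, and in its Hilbert completion `δₓ - δₒ`
and `δᵧ - δₒ` are at squared distance `K x y` (Schoenberg). So it suffices that `‖x - y‖` is of
negative type. Negative type is stable under pullback and integration, and `‖x - y‖²` has it since
its mass-zero sums equal `-2 ‖∑ₓ α x • x‖²`. On the line `|s - t| = ∫ (1_{u < s} - 1_{u < t})² du`;
in finite dimension, reflection invariance of the unit ball gives
`‖x‖ = c⁻¹ ∫_{‖ω‖ ≤ 1} |⟪ω, x⟫| dω`; and every finite configuration lies in a finite-dimensional subspace.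
-/

open Finsupp MeasureTheory Metric Set

universe u

noncomputable section

variable {X : Type u} {Y : Type*}

def kernelForm (K : X → X → ℝ) : (X →₀ ℝ) →ₗ[ℝ] (X →₀ ℝ) →ₗ[ℝ] ℝ :=
  linearCombination ℝ fun x => linearCombination ℝ (K x)

theorem kernelForm_apply (K : X → X → ℝ) (α β : X →₀ ℝ) :
    kernelForm K α β = ∑ x ∈ α.support, ∑ y ∈ β.support, α x * β y * K x y := by
  simp [kernelForm, linearCombination_apply, Finsupp.sum, Finset.mul_sum, mul_assoc]

theorem kernelForm_single_single (K : X → X → ℝ) (x y : X) :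
    kernelForm K (single x 1) (single y 1) = K x y := by
  simp [kernelForm]

theorem kernelForm_comm {K : X → X → ℝ} (hK : ∀ x y, K x y = K y x) (α β : X →₀ ℝ) :
    kernelForm K α β = kernelForm K β α := by
  rw [kernelForm_apply, kernelForm_apply, Finset.sum_comm]
  simp only [hK, mul_comm (α _)]

theorem kernelForm_mapDomain (K : X → X → ℝ) (v : Y → X) (α β : Y →₀ ℝ) :
    kernelForm K (mapDomain v α) (mapDomain v β) = kernelForm (fun a b => K (v a) (v b)) α β := by
  rw [kernelForm, kernelForm, linearCombination_mapDomain, linearCombination_apply,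
    linearCombination_apply]
  simp [Finsupp.sum, Function.comp_def]

def IsNegType (K : X → X → ℝ) : Prop :=
  ∀ α : X →₀ ℝ, α.degree = 0 → kernelForm K α α ≤ 0

theorem IsNegType.comp {K : X → X → ℝ} (hK : IsNegType K) (v : Y → X) :
    IsNegType fun a b => K (v a) (v b) := fun α hα => by
  simpa [kernelForm_mapDomain] using hK (mapDomain v α) (by rwa [degree_mapDomain])

theorem IsNegType.const_mul {K : X → X → ℝ} (hK : IsNegType K) {c : ℝ} (hc : 0 ≤ c) :
    IsNegType fun x y => c * K x y := fun α hα => by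
  have : kernelForm (fun x y => c * K x y) α α = c * kernelForm K α α := by
    simp only [kernelForm_apply, Finset.mul_sum, mul_left_comm c]
  rw [this]
  exact mul_nonpos_of_nonneg_of_nonpos hc (hK α hα)

theorem IsNegType.integral {Ω : Type*} [MeasurableSpace Ω] {μ : Measure Ω}
    {K : Ω → X → X → ℝ} (hK : ∀ ω, IsNegType (K ω))
    (hint : ∀ x y, Integrable (fun ω => K ω x y) μ) :
    IsNegType fun x y => ∫ ω, K ω x y ∂μ := fun α hα => by
  have : kernelForm (fun x y => ∫ ω, K ω x y ∂μ) α α = ∫ ω, kernelForm (K ω) α α ∂μ := by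
    simp only [kernelForm_apply]
    rw [integral_finsetSum _ fun x _ => integrable_finsetSum _ fun y _ => (hint x y).const_mul _]
    refine Finset.sum_congr rfl fun x _ => ?_
    rw [integral_finsetSum _ fun y _ => (hint x y).const_mul _]
    simp only [integral_const_mul]
  rw [this]
  exact integral_nonpos fun ω => hK ω α hα

theorem isNegType_norm_sub_sq (E : Type*) [SeminormedAddCommGroup E] [InnerProductSpace ℝ E] :
    IsNegType fun x y : E => ‖x - y‖ ^ 2 := fun α hα => by
  rw [degree_apply] at hα
  have hexpand : ∀ x y, α x * α y * ‖x - y‖ ^ 2 =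
      α x * ‖x‖ ^ 2 * α y + α x * (α y * ‖y‖ ^ 2) - 2 * inner ℝ (α x • x) (α y • y) := by
    intro x y
    rw [norm_sub_sq_real, real_inner_smul_left, real_inner_smul_right]
    ring
  have : kernelForm (fun x y : E => ‖x - y‖ ^ 2) α α = -2 * ‖∑ x ∈ α.support, α x • x‖ ^ 2 := by
    rw [kernelForm_apply, ← real_inner_self_eq_norm_sq, sum_inner]
    simp only [hexpand, Finset.sum_sub_distrib, Finset.sum_add_distrib, ← Finset.mul_sum,
      ← Finset.sum_mul, hα, inner_sum]
    ring
  rw [this]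
  exact mul_nonpos_of_nonpos_of_nonneg (by norm_num) (sq_nonneg _)

theorem sq_indicator_Iio_sub_indicator_Iio (s t u : ℝ) :
    ((Iio s).indicator 1 u - (Iio t).indicator 1 u) ^ 2 =
      (Ico (min s t) (max s t)).indicator (1 : ℝ → ℝ) u := by
  simp only [Set.indicator_apply, mem_Iio, mem_Ico, Pi.one_apply, min_le_iff, lt_max_iff]
  split_ifs <;> grind

theorem abs_sub_eq_integral_sq_indicator_Iio_sub (s t : ℝ) :
    |s - t| = ∫ u, ((Iio s).indicator 1 u - (Iio t).indicator 1 u) ^ 2 := by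
  simp_rw [sq_indicator_Iio_sub_indicator_Iio]
  rw [integral_indicator_one measurableSet_Ico, Real.volume_real_Ico_of_le min_le_max,
    max_sub_min_eq_abs']

theorem isNegType_abs_sub : IsNegType fun s t : ℝ => |s - t| := by
  simp_rw [abs_sub_eq_integral_sq_indicator_Iio_sub]
  refine IsNegType.integral (fun u => ?_) fun s t => ?_
  · simpa [Real.norm_eq_abs, sq_abs] using
      (isNegType_norm_sub_sq ℝ).comp fun s => (Iio s).indicator 1 u
  · simp_rw [sq_indicator_Iio_sub_indicator_Iio]
    exact (integrable_indicator_iff measurableSet_Ico).2 (integrableOn_const (by simp))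

section FiniteDimensional

variable {E : Type*} [NormedAddCommGroup E] [InnerProductSpace ℝ E] [FiniteDimensional ℝ E]
  [MeasurableSpace E] [BorelSpace E]

theorem setIntegral_closedBall_abs_inner_eq_of_norm_eq {x y : E} (h : ‖x‖ = ‖y‖) :
    ∫ ω in closedBall 0 1, |inner ℝ ω x| = ∫ ω in closedBall 0 1, |inner ℝ ω y| := by
  set R := (ℝ ∙ (x - y))ᗮ.reflection
  have hRx : R x = y := Submodule.reflection_sub h
  calc ∫ ω in closedBall 0 1, |inner ℝ ω x|
      = ∫ ω in R ⁻¹' closedBall 0 1, |inner ℝ (R ω) (R x)| := by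
        simp_rw [R.preimage_closedBall, map_zero, R.inner_map_map]
    _ = ∫ ω in closedBall 0 1, |inner ℝ ω y| := by
        rw [hRx]
        exact R.measurePreserving.setIntegral_preimage_emb R.toHomeomorph.measurableEmbedding
          (fun ω => |inner ℝ ω y|) _

theorem setIntegral_closedBall_abs_inner_eq_mul_norm {e : E} (he : ‖e‖ = 1) (x : E) :
    ∫ ω in closedBall 0 1, |inner ℝ ω x| = (∫ ω in closedBall 0 1, |inner ℝ ω e|) * ‖x‖ := by
  rw [setIntegral_closedBall_abs_inner_eq_of_norm_eq (y := ‖x‖ • e) (by simp [norm_smul, he])]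
  simp_rw [inner_smul_right, abs_mul, abs_norm]
  rw [integral_const_mul, mul_comm]

theorem setIntegral_closedBall_abs_inner_pos {e : E} (he : e ≠ 0) :
    0 < ∫ ω in closedBall 0 1, |inner ℝ ω e| := by
  have hcont : Continuous fun ω : E => |inner ℝ ω e| := by fun_prop
  rw [setIntegral_pos_iff_support_of_nonneg_ae (.of_forall fun _ => abs_nonneg _)
    (hcont.continuousOn.integrableOn_compact (isCompact_closedBall 0 1))]
  have hmem : (2 * ‖e‖)⁻¹ • e ∈ Function.support (fun ω : E => |inner ℝ ω e|) ∩ ball 0 1 := by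
    have : 0 < ‖e‖ := norm_pos_iff.2 he
    refine ⟨?_, ?_⟩
    · simp [real_inner_smul_left, he]
    · rw [mem_ball_zero_iff, norm_smul, norm_inv, Real.norm_of_nonneg (by positivity)]
      field_simp
      norm_num
  calc (0 : ENNReal) < volume (Function.support (fun ω : E => |inner ℝ ω e|) ∩ ball 0 1) :=
        ((hcont.isOpen_support).inter isOpen_ball).measure_pos _ ⟨_, hmem⟩
    _ ≤ _ := measure_mono (inter_subset_inter_right _ ball_subset_closedBall)

end FiniteDimensional

theorem isNegType_norm_sub_of_finiteDimensional (E : Type*) [NormedAddCommGroup E]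
    [InnerProductSpace ℝ E] [FiniteDimensional ℝ E] : IsNegType fun x y : E => ‖x - y‖ := by
  borelize E
  rcases subsingleton_or_nontrivial E with hE | hE
  · intro α _
    simp [kernelForm_apply, Subsingleton.elim _ (0 : E)]
  obtain ⟨e, he⟩ := exists_norm_eq E zero_le_one
  set c := ∫ ω in closedBall (0 : E) 1, |inner ℝ ω e|
  have hc : 0 < c := setIntegral_closedBall_abs_inner_pos (norm_ne_zero_iff.1 (he ▸ one_ne_zero))
  have hnorm : (fun x y : E => ‖x - y‖) =
      fun x y => c⁻¹ * ∫ ω in closedBall 0 1, |inner ℝ ω x - inner ℝ ω y| := by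
    ext x y
    simp_rw [← inner_sub_right]
    rw [setIntegral_closedBall_abs_inner_eq_mul_norm he,
      inv_mul_cancel_left₀ hc.ne']
  rw [hnorm]
  refine (IsNegType.integral (fun ω => isNegType_abs_sub.comp fun x => inner ℝ ω x)
    fun x y => ?_).const_mul (inv_nonneg.2 hc.le)
  exact (Continuous.continuousOn (by fun_prop)).integrableOn_compact (isCompact_closedBall 0 1)

theorem isNegType_norm_sub (E : Type*) [NormedAddCommGroup E] [InnerProductSpace ℝ E] :
    IsNegType fun x y : E => ‖x - y‖ := by
  intro α hα
  set W := Submodule.span ℝ (α.support : Set E)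
  have hα' : mapDomain W.subtype (comapDomain W.subtype α W.injective_subtype.injOn) = α :=
    mapDomain_comapDomain W.subtype W.injective_subtype α
      (by simp [W, Submodule.subset_span])
  rw [← hα', kernelForm_mapDomain]
  exact isNegType_norm_sub_of_finiteDimensional W _ (by rwa [← degree_mapDomain, hα'])

variable (X) in
def degreeKer : Submodule ℝ (X →₀ ℝ) :=
  LinearMap.ker (linearCombination ℝ fun _ : X => (1 : ℝ))

theorem mem_degreeKer {α : X →₀ ℝ} : α ∈ degreeKer X ↔ α.degree = 0 := by
  simp [degreeKer, degree_apply, linearCombination_apply, Finsupp.sum]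

@[reducible]
def IsNegType.innerCore {K : X → X → ℝ} (hK : IsNegType K)
    (hsymm : ∀ x y, K x y = K y x) : PreInnerProductSpace.Core ℝ (degreeKer X) where
  inner α β := -kernelForm K α β / 2
  conj_inner_symm α β := by simp [kernelForm_comm hsymm (α : X →₀ ℝ)]
  re_inner_nonneg α := by
    have := hK α (mem_degreeKer.1 α.2)
    simp only [RCLike.re_to_real]
    linarith
  add_left α β γ := by simp only [Submodule.coe_add, map_add, LinearMap.add_apply]; ring
  smul_left α β r := by
    simp only [Submodule.coe_smul, map_smul, LinearMap.smul_apply, smul_eq_mul, conj_trivial]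
    ring

theorem IsNegType.exists_norm_sub_sq_eq {K : X → X → ℝ} (hK : IsNegType K)
    (hsymm : ∀ x y, K x y = K y x) (hdiag : ∀ x, K x x = 0) :
    ∃ (H : Type u) (_ : NormedAddCommGroup H) (_ : InnerProductSpace ℝ H) (_ : CompleteSpace H)
      (g : X → H), ∀ x y, ‖g x - g y‖ ^ 2 = K x y := by
  let _ : SeminormedAddCommGroup (degreeKer X) :=
    InnerProductSpace.Core.toSeminormedAddCommGroup (c := hK.innerCore hsymm)
  let _ : InnerProductSpace ℝ (degreeKer X) := InnerProductSpace.ofCore (hK.innerCore hsymm)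
  refine ⟨UniformSpace.Completion (SeparationQuotient (degreeKer X)), inferInstance,
    inferInstance, inferInstance, ?_⟩
  rcases isEmpty_or_nonempty X with _ | ⟨⟨o⟩⟩
  · exact ⟨isEmptyElim, isEmptyElim⟩
  let v (x : X) : degreeKer X := ⟨single x 1 - single o 1, by simp [mem_degreeKer]⟩
  refine ⟨fun x => ((SeparationQuotient.mk (v x) : SeparationQuotient _) :
    UniformSpace.Completion _), fun x y => ?_⟩
  rw [← UniformSpace.Completion.coe_sub, UniformSpace.Completion.norm_coe,
    ← SeparationQuotient.mk_sub, SeparationQuotient.norm_mk, ← real_inner_self_eq_norm_sq]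
  have hv : ((v x - v y : degreeKer X) : X →₀ ℝ) = single x 1 - single y 1 :=
    sub_sub_sub_cancel_right _ _ _
  change -kernelForm K (v x - v y : degreeKer X) (v x - v y : degreeKer X) / 2 = K x y
  simp only [hv, map_sub, LinearMap.sub_apply, kernelForm_single_single, hdiag, hsymm y x]
  ring

end

theorem stmt_9_general {S : Type} {H : Type*}
    [NormedAddCommGroup H] [InnerProductSpace ℝ H]
    (f : S → H) :
    ∃ (H' : Type) (_ : NormedAddCommGroup H') (_ : InnerProductSpace ℝ H')
      (_ : CompleteSpace H') (g : S → H'),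
      ∀ x₁ x₂ : S, ‖g x₁ - g x₂‖ = Real.sqrt ‖f x₁ - f x₂‖ := by
  obtain ⟨H', _, _, _, g, hg⟩ := ((isNegType_norm_sub H).comp f).exists_norm_sub_sq_eq
    (fun x y => norm_sub_rev _ _) (fun x => by simp)
  exact ⟨H', inferInstance, inferInstance, inferInstance, g,
    fun x₁ x₂ => by rw [← hg, Real.sqrt_sq (norm_nonneg _)]⟩

theorem stmt_9 {S : Type} {H : Type*}
    [NormedAddCommGroup H] [InnerProductSpace ℝ H] [CompleteSpace H]
    (f : S → H) :
    ∃ (H' : Type) (_ : NormedAddCommGroup H') (_ : InnerProductSpace ℝ H')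
      (_ : CompleteSpace H') (g : S → H'),
      ∀ x₁ x₂ : S, ‖g x₁ - g x₂‖ = Real.sqrt ‖f x₁ - f x₂‖ :=
  stmt_9_general f
end

section
/- A kernel K : S × S → ℝ admits a representation K(s₁,s₂) = ‖f(s₁) - f(s₂)‖²_H for some map f from S to a real Hilbert space H if and only if K is symmetric, K(s,s) = 0 for all s ∈ S, and K is negative-definite (i.e., Σ_{i,j} α_i α_j K(s_i,s_j) ≤ 0 for all finite collections with Σ_i α_i = 0). -/
/-!
If `K s t = ‖f s - f t‖²` and `∑ αᵢ = 0`, then `∑ αᵢ αⱼ K(sᵢ, sⱼ) = -2 ‖∑ αᵢ f(sᵢ)‖² ≤ 0`.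
Conversely, fix a base point `s₀` and let `k(s, t) = (K(s, s₀) + K(t, s₀) - K(s, t)) / 2`.
Applying negative-definiteness to the points `sᵢ` together with `s₀` weighted by `-∑ αᵢ` shows
that `k` is positive semidefinite, so by Moore's theorem (the RKHS of `k`) it is the Gram kernel
`k(s, t) = ⟪f s, f t⟫` of a map into a Hilbert space, and then
`‖f s - f t‖² = k(s, s) + k(t, t) - 2 k(s, t) = K(s, t)`.
-/

open scoped RealInnerProductSpace

theorem sum_sum_mul_mul_norm_sub_sq_of_sum_eq_zero {ι E : Type*} [Fintype ι]
    [NormedAddCommGroup E] [InnerProductSpace ℝ E] (α : ι → ℝ) (v : ι → E)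
    (hα : ∑ i, α i = 0) :
    ∑ i, ∑ j, α i * α j * ‖v i - v j‖ ^ 2 = -2 * ‖∑ i, α i • v i‖ ^ 2 := by
  have hgram : ‖∑ i, α i • v i‖ ^ 2 = ∑ i, ∑ j, α i * α j * ⟪v i, v j⟫ := by
    rw [← real_inner_self_eq_norm_sq, sum_inner]
    simp only [inner_sum, real_inner_smul_left, real_inner_smul_right, mul_assoc, mul_left_comm]
  have hleft : ∑ i, ∑ j, α i * α j * ‖v i‖ ^ 2 = 0 := by
    simp only [mul_right_comm (α _) (α _), ← Finset.sum_mul_sum, hα, mul_zero]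
  have hright : ∑ i, ∑ j, α i * α j * ‖v j‖ ^ 2 = 0 := by
    simp only [mul_assoc, ← Finset.sum_mul_sum, hα, zero_mul]
  simp only [norm_sub_sq_real, mul_add, mul_sub, Finset.sum_add_distrib, Finset.sum_sub_distrib,
    hleft, hright, hgram, Finset.mul_sum, mul_left_comm _ (2 : ℝ), zero_sub, neg_mul, add_zero,
    Finset.sum_neg_distrib]

namespace Matrix

universe u

variable {X : Type u}

theorem posSemidef_of_sum_fin_nonneg {k : Matrix X X ℝ} (hk : k.IsHermitian)
    (h : ∀ (n : ℕ) (α : Fin n → ℝ) (x : Fin n → X), 0 ≤ ∑ i, ∑ j, α i * α j * k (x i) (x j)) :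
    k.PosSemidef := by
  refine ⟨hk, fun c => ?_⟩
  let e := c.support.equivFin
  refine (h _ (fun i => c (e.symm i)) (fun i => e.symm i)).trans_eq ?_
  calc _ = ∑ x : c.support, ∑ y : c.support, c x * k x y * c y :=
        Fintype.sum_equiv e.symm _ _ fun i => Fintype.sum_equiv e.symm _ _ fun j => by ring
    _ = _ := by
      simp only [Finsupp.sum, star_trivial]
      rw [← Finset.sum_coe_sort c.support]
      exact Fintype.sum_congr _ _ fun x => Finset.sum_coe_sort c.support fun y => c x * k x y * c y

theorem PosSemidef.map_algebraMap_clm {k : Matrix X X ℝ} (hk : k.PosSemidef) :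
    (k.map (algebraMap ℝ (ℝ →L[ℝ] ℝ))).PosSemidef := by
  have iff := (RKHS.posSemidef_tfae (K := k.map (algebraMap ℝ (ℝ →L[ℝ] ℝ)))).out 0 2
  refine iff.mpr ⟨hk.isHermitian.map _ algebraMap_star_comm, fun c => ?_⟩
  rw [Finsupp.sum_comm]
  simpa [mul_comm, mul_left_comm] using hk.2 c

theorem PosSemidef.exists_inner_eq {k : Matrix X X ℝ} (hk : k.PosSemidef) :
    ∃ (H : Type u) (_ : NormedAddCommGroup H) (_ : InnerProductSpace ℝ H) (_ : CompleteSpace H)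
      (f : X → H), ∀ x y, ⟪f x, f y⟫ = k x y := by
  have : Fact (k.map (algebraMap ℝ (ℝ →L[ℝ] ℝ))).PosSemidef := ⟨hk.map_algebraMap_clm⟩
  refine ⟨RKHS.OfKernel (k.map (algebraMap ℝ (ℝ →L[ℝ] ℝ))), inferInstance, inferInstance,
    inferInstance, fun x => RKHS.kerFun _ x 1, fun x y => ?_⟩
  rw [real_inner_comm, ← RKHS.kernel_inner]
  simp

end Matrix

section GromovKernel

variable {S : Type*}

-- For `K = ‖f · - f ·‖²` this is `⟪f s - f s₀, f t - f s₀⟫`.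
noncomputable def gromovKernel (K : S → S → ℝ) (s₀ : S) : Matrix S S ℝ :=
  Matrix.of fun s t => (K s s₀ + K t s₀ - K s t) / 2

theorem two_mul_sum_sum_gromovKernel (K : S → S → ℝ) (s₀ : S) {ι : Type*} [Fintype ι]
    (α : ι → ℝ) (s : ι → S) :
    2 * ∑ i, ∑ j, α i * α j * gromovKernel K s₀ (s i) (s j) =
      2 * (∑ i, α i) * ∑ i, α i * K (s i) s₀ - ∑ i, ∑ j, α i * α j * K (s i) (s j) := by
  calc _ = ∑ i, ∑ j, α i * K (s i) s₀ * α j + ∑ i, ∑ j, α i * (α j * K (s j) s₀)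
        - ∑ i, ∑ j, α i * α j * K (s i) (s j) := by
        simp only [Finset.mul_sum, ← Finset.sum_add_distrib, ← Finset.sum_sub_distrib]
        exact Fintype.sum_congr _ _ fun i => Fintype.sum_congr _ _ fun j => by
          simp only [gromovKernel, Matrix.of_apply]; ring
    _ = _ := by simp only [← Finset.sum_mul_sum]; ring

theorem sum_sum_cons_eq_neg_two_mul_sum_sum_gromovKernel {K : S → S → ℝ}
    (hsymm : ∀ s t, K s t = K t s) {s₀ : S} (hs₀ : K s₀ s₀ = 0) {n : ℕ} (α : Fin n → ℝ)
    (s : Fin n → S) :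
    ∑ i, ∑ j, (Fin.cons (-∑ i, α i) α : Fin (n + 1) → ℝ) i *
        (Fin.cons (-∑ i, α i) α : Fin (n + 1) → ℝ) j *
        K ((Fin.cons s₀ s : Fin (n + 1) → S) i) ((Fin.cons s₀ s : Fin (n + 1) → S) j) =
      -2 * ∑ i, ∑ j, α i * α j * gromovKernel K s₀ (s i) (s j) := by
  rw [neg_mul, two_mul_sum_sum_gromovKernel]
  set A := ∑ i, α i
  set L := ∑ i, α i * K (s i) s₀
  have hL : ∀ c, ∑ i, c * α i * K (s i) s₀ = c * L := fun c => by
    simp only [L, mul_assoc, Finset.mul_sum]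
  simp only [Fin.sum_univ_succ, Fin.cons_zero, Fin.cons_succ, hs₀, hsymm s₀,
    Finset.sum_add_distrib, mul_comm (α _) (-A), hL]
  ring

theorem posSemidef_gromovKernel {K : S → S → ℝ} (hsymm : ∀ s t, K s t = K t s) {s₀ : S}
    (hs₀ : K s₀ s₀ = 0)
    (hneg : ∀ (n : ℕ) (α : Fin n → ℝ) (s : Fin n → S), ∑ i, α i = 0 →
      ∑ i, ∑ j, α i * α j * K (s i) (s j) ≤ 0) :
    (gromovKernel K s₀).PosSemidef := by
  refine Matrix.posSemidef_of_sum_fin_nonneg (Matrix.IsHermitian.ext fun s t => ?_)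
    fun n α s => ?_
  · simp only [gromovKernel, Matrix.of_apply, star_trivial, hsymm s t]
    ring
  · have hcons := hneg (n + 1) (Fin.cons (-∑ i, α i) α) (Fin.cons s₀ s) (by simp [Fin.sum_cons])
    rw [sum_sum_cons_eq_neg_two_mul_sum_sum_gromovKernel hsymm hs₀] at hcons
    linarith

end GromovKernel

theorem stmt_11 {S : Type} (K : S → S → ℝ) :
    (∃ (H : Type) (_ : NormedAddCommGroup H) (_ : InnerProductSpace ℝ H)
      (_ : CompleteSpace H) (f : S → H),
      ∀ s₁ s₂ : S, K s₁ s₂ = ‖f s₁ - f s₂‖ ^ 2) ↔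
    ((∀ s₁ s₂ : S, K s₁ s₂ = K s₂ s₁) ∧ (∀ s : S, K s s = 0) ∧
      ∀ (n : ℕ) (α : Fin n → ℝ) (s : Fin n → S), (∑ i, α i) = 0 →
        ∑ i, ∑ j, α i * α j * K (s i) (s j) ≤ 0) := by
  constructor
  · rintro ⟨H, _, _, _, f, hf⟩
    refine ⟨fun s₁ s₂ => by rw [hf, hf, norm_sub_rev], fun s => by simp [hf], fun n α s hα => ?_⟩
    simp only [hf]
    rw [sum_sum_mul_mul_norm_sub_sq_of_sum_eq_zero α (fun i => f (s i)) hα]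
    exact mul_nonpos_of_nonpos_of_nonneg (by norm_num) (sq_nonneg _)
  · rintro ⟨hsymm, hdiag, hneg⟩
    rcases isEmpty_or_nonempty S with _ | ⟨⟨s₀⟩⟩
    · exact ⟨ℝ, inferInstance, inferInstance, inferInstance, fun _ => 0, isEmptyElim⟩
    obtain ⟨H, _, _, _, f, hf⟩ := (posSemidef_gromovKernel hsymm (hdiag s₀) hneg).exists_inner_eq
    refine ⟨H, inferInstance, inferInstance, inferInstance, f, fun s t => ?_⟩
    rw [norm_sub_sq_real, ← real_inner_self_eq_norm_sq, ← real_inner_self_eq_norm_sq, hf, hf, hf]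
    simp only [gromovKernel, Matrix.of_apply, hdiag]
    ring
end

section
/- For any real Hilbert space H, the function h ↦ e^{-‖h‖²} is positive-definite on H: for every n, every α₁,…,α_n ∈ ℝ, and every h₁,…,h_n ∈ H, Σ_{i,j=1}^n α_i α_j e^{-‖h_i - h_j‖²} ≥ 0. -/
/-!
Expanding the square, `exp (-‖x - y‖²) = exp (-‖x‖²) * exp (-‖y‖²) * exp (2 ⟪x, y⟫)`, so after
rescaling the coefficients it suffices that the entrywise exponential of the Gram matrix
`⟪h i, h j⟫` is positive semidefinite. By the Schur product theorem every entrywise power of a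
positive semidefinite matrix is positive semidefinite, and the entrywise exponential is a
nonnegative combination `∑ₖ (k!)⁻¹ A^{⊙k}` of them.
-/

open Matrix
open scoped InnerProductSpace ComplexOrder Nat

namespace Matrix

variable {ι 𝕜 : Type*} [RCLike 𝕜]

theorem posSemidef_allOnes : (of fun _ _ => (1 : 𝕜) : Matrix ι ι 𝕜).PosSemidef := by
  refine ⟨by ext; simp, fun x => ?_⟩
  have hsq : (x.sum fun i xi => x.sum fun j xj =>
        star xi * (of fun _ _ => (1 : 𝕜) : Matrix ι ι 𝕜) i j * xj)
      = star (x.sum fun _ xi => xi) * x.sum fun _ xj => xj := by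
    simp only [Finsupp.sum, of_apply, mul_one, star_sum, Finset.sum_mul, Finset.mul_sum]
    exact Finset.sum_comm
  rw [hsq]
  exact star_mul_self_nonneg _

theorem PosSemidef.map_pow {A : Matrix ι ι 𝕜} (hA : A.PosSemidef) (k : ℕ) :
    (A.map (· ^ k)).PosSemidef := by
  induction k with
  | zero => convert posSemidef_allOnes using 1; ext; simp
  | succ k ih =>
    have hsucc : A.map (· ^ (k + 1)) = A.map (· ^ k) ⊙ A := by ext; simp [pow_succ]
    exact hsucc ▸ ih.hadamard hA

theorem PosSemidef.map_exp {A : Matrix ι ι ℝ} (hA : A.PosSemidef) :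
    (A.map Real.exp).PosSemidef := by
  refine ⟨hA.isHermitian.map _ fun _ => rfl, fun x => ?_⟩
  have hentry : ∀ i j, HasSum (fun k : ℕ => (k ! : ℝ)⁻¹ * (star (x i) * A i j ^ k * x j))
      (star (x i) * A.map Real.exp i j * x j) := by
    intro i j
    have hexp := ((NormedSpace.expSeries_div_hasSum_exp (A i j)).mul_left
      (star (x i))).mul_right (x j)
    simpa [Real.exp_eq_exp_ℝ, div_eq_inv_mul, mul_comm, mul_left_comm, mul_assoc] using hexp
  refine (hasSum_sum fun i _ => hasSum_sum fun j _ => hentry i j).nonneg fun k => ?_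
  simpa [Finsupp.sum, Finset.mul_sum] using
    mul_nonneg (inv_nonneg.2 (Nat.cast_nonneg (k !))) ((hA.map_pow k).2 x)

theorem PosSemidef.sum_mul_mul_nonneg [Fintype ι] {A : Matrix ι ι ℝ} (hA : A.PosSemidef)
    (x : ι → ℝ) : 0 ≤ ∑ i, ∑ j, x i * x j * A i j := by
  simpa [dotProduct, mulVec, Finset.mul_sum, mul_comm, mul_left_comm, mul_assoc] using
    hA.dotProduct_mulVec_nonneg x

end Matrix

theorem Real.exp_neg_norm_sub_sq {H : Type*} [NormedAddCommGroup H] [InnerProductSpace ℝ H]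
    (x y : H) :
    exp (-‖x - y‖ ^ 2) = exp (-‖x‖ ^ 2) * exp (-‖y‖ ^ 2) * exp (2 * ⟪x, y⟫_ℝ) := by
  rw [norm_sub_sq_real, ← exp_add, ← exp_add]
  ring_nf

theorem stmt_12_general {H : Type*} [NormedAddCommGroup H] [InnerProductSpace ℝ H]
    (n : ℕ) (α : Fin n → ℝ) (h : Fin n → H) :
    0 ≤ ∑ i, ∑ j, α i * α j * Real.exp (-‖h i - h j‖ ^ 2) := by
  have hK : (((2 : ℝ) • gram ℝ h).map Real.exp).PosSemidef :=
    ((posSemidef_gram ℝ h).smul zero_le_two).map_exp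
  convert hK.sum_mul_mul_nonneg (fun i => α i * Real.exp (-‖h i‖ ^ 2)) using 3 with i _ j _
  simp only [Real.exp_neg_norm_sub_sq, map_apply, Matrix.smul_apply, gram_apply, smul_eq_mul]
  ring

theorem stmt_12 {H : Type*} [NormedAddCommGroup H] [InnerProductSpace ℝ H]
    [CompleteSpace H] (n : ℕ) (α : Fin n → ℝ) (h : Fin n → H) :
    0 ≤ ∑ i, ∑ j, α i * α j * Real.exp (-‖h i - h j‖ ^ 2) :=
  stmt_12_general n α h
end

section
/- Let X' be a finite metric space, 0 < s₁ < s₂ and 0 < τ₁ < τ₂ < τ₃ be reals, and suppose X' admits no (s₁,s₂,τ₁,τ₂,τ₃)-threshold map into ℓ₂. Then there exist two finitely-supported symmetric probability measures μ₁, μ₂ on X' × X' such that μ₁ is supported on pairs at distance ≤ s₁, μ₂ is supported on pairs at distance ≥ s₂, and for every map f : X' → ℓ₂: E_{(x,y)∼μ₁}[‖f(x)-f(y)‖²] ≥ (τ₁/τ₂)² · E_{(x,y)∼μ₂}[‖f(x)-f(y)‖²] − (2τ₁/τ₃)² · sup_{x∈X'}‖f(x)‖². -/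
/-!
Squared distances of points of `ℓ²` are exactly the symmetric, zero-diagonal, conditionally
negative definite kernels (Schoenberg), a closed convex cone, while the squared-distance profiles
of threshold maps form a box. With no threshold map the two are disjoint, and Hahn–Banach yields a
symmetric weight `c` with `∑ c d ≥ 0` on the cone and `∑ c l < 0` on the box. At the vertex of the
box maximising `∑ c l` this reads `τ₁² C + τ₃² R < τ₂² F`, where `C` and `R` are the masses of `c⁺`
on close and on all other pairs and `F` is the mass of `c⁻` on far pairs. For
`d = ‖f x - f y‖² ≤ 4 sup ‖f‖²` it gives `∑_far c⁻ d ≤ ∑_close c⁺ d + 4 R sup ‖f‖²`, and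
normalising `c⁻` on far pairs and `c⁺` on close pairs (padded with mass on the diagonal, where `d`
vanishes) gives `μ₂` and `μ₁`.
-/

open Matrix Set
open scoped RealInnerProductSpace

section SqEuclidean

variable {ι : Type*} [Fintype ι]

theorem exists_lp_inner_eq_of_posSemidef {G : Matrix ι ι ℝ} (hG : G.PosSemidef) :
    ∃ F : ι → lp (fun _ : ℕ => ℝ) 2, ∀ i j, ⟪F i, F j⟫ = G i j := by
  obtain ⟨m, v, rfl⟩ := Matrix.posSemidef_iff_eq_sum_vecMulVec.1 hG
  set e : HilbertBasis ℕ ℝ (lp (fun _ : ℕ => ℝ) 2) := default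
  have he : Orthonormal ℝ fun k : Fin m => e k := e.orthonormal.comp _ Fin.val_injective
  refine ⟨fun i => ∑ k, v k i • e k, fun i j => ?_⟩
  rw [he.inner_sum]
  simp [Matrix.sum_apply, vecMulVec_apply]

variable (ι) in
def sqEuclideanCone : ProperCone ℝ (ι × ι → ℝ) where
  carrier := {D | (∀ x y, D (x, y) = D (y, x)) ∧ (∀ x, D (x, x) = 0) ∧
    ∀ b : ι → ℝ, ∑ x, b x = 0 → ∑ x, ∑ y, b x * b y * D (x, y) ≤ 0}
  add_mem' := by
    rintro D E ⟨hD₁, hD₂, hD₃⟩ ⟨hE₁, hE₂, hE₃⟩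
    refine ⟨fun x y => by simp [hD₁ x y, hE₁ x y], fun x => by simp [hD₂ x, hE₂ x],
      fun b hb => ?_⟩
    simpa [mul_add, Finset.sum_add_distrib] using add_nonpos (hD₃ b hb) (hE₃ b hb)
  zero_mem' := by simp
  smul_mem' := by
    rintro t D ⟨hD₁, hD₂, hD₃⟩
    rw [← Nonneg.coe_smul]
    refine ⟨fun x y => by simp [hD₁ x y], fun x => by simp [hD₂ x], fun b hb => ?_⟩
    simp only [Pi.smul_apply, smul_eq_mul, mul_left_comm _ (t : ℝ), ← Finset.mul_sum]
    exact mul_nonpos_of_nonneg_of_nonpos t.2 (hD₃ b hb)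
  isClosed' := by
    simp only [Set.ofPred_and, Set.ofPred_forall]
    refine .inter (isClosed_iInter fun x => isClosed_iInter fun y => isClosed_eq
      (continuous_apply _) (continuous_apply _)) (.inter (isClosed_iInter fun x => isClosed_eq
      (continuous_apply _) continuous_const) (isClosed_iInter fun b => isClosed_iInter fun _ =>
      isClosed_le (by fun_prop) continuous_const))

theorem posSemidef_of_mem_sqEuclideanCone {D : ι × ι → ℝ} (hD : D ∈ sqEuclideanCone ι)
    (x₀ : ι) : (Matrix.of fun x y => (D (x, x₀) + D (y, x₀) - D (x, y)) / 2).PosSemidef := by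
  classical
  obtain ⟨hsymm, hdiag, hneg⟩ := hD
  set Dm : Matrix ι ι ℝ := Matrix.of fun x y => D (x, y)
  set e : ι → ℝ := Pi.single x₀ 1
  have hDm : Dmᵀ = Dm := by ext x y; exact hsymm y x
  have hG : (Matrix.of fun x y => (D (x, x₀) + D (y, x₀) - D (x, y)) / 2) =
      (1 / 2 : ℝ) • (vecMulVec (Dm *ᵥ e) 1 + vecMulVec 1 (Dm *ᵥ e) - Dm) := by
    ext x y; simp [Dm, e, mulVec_single]; ring
  refine .of_dotProduct_mulVec_nonneg ?_ fun v => ?_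
  · rw [IsHermitian.ext_iff]; intro x y; simp [hsymm]; ring
  -- `v ↦ v - (∑ v) e` projects onto the hyperplane where `D` is negative semidefinite
  set b := v - (1 ⬝ᵥ v) • e
  have hb : ∑ x, b x = 0 := by simp [b, e, Pi.single_apply, one_dotProduct]
  have hQ : b ⬝ᵥ Dm *ᵥ b = ∑ x, ∑ y, b x * b y * D (x, y) := by
    simp only [dotProduct, mulVec, Dm, of_apply, Finset.mul_sum]
    exact Finset.sum_congr rfl fun x _ => Finset.sum_congr rfl fun y _ => by ring
  have he : e ⬝ᵥ Dm *ᵥ v = v ⬝ᵥ Dm *ᵥ e := by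
    rw [dotProduct_mulVec, ← mulVec_transpose, hDm, dotProduct_comm]
  have hee : e ⬝ᵥ Dm *ᵥ e = 0 := by simp [e, Dm, hdiag]
  have key : star v ⬝ᵥ ((1 / 2 : ℝ) • (vecMulVec (Dm *ᵥ e) 1 + vecMulVec 1 (Dm *ᵥ e) - Dm)) *ᵥ v
      = -(b ⬝ᵥ Dm *ᵥ b) / 2 := by
    simp only [b, star_trivial, smul_mulVec, add_mulVec, sub_mulVec, vecMulVec_mulVec,
      dotProduct_smul, dotProduct_add, dotProduct_sub, sub_dotProduct, mulVec_sub, mulVec_smul,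
      smul_dotProduct, he, hee, smul_eq_mul, op_smul_eq_mul]
    rw [dotProduct_comm (Dm *ᵥ e) v, dotProduct_comm v 1]
    ring
  rw [hG, key, hQ]
  linarith [hneg b hb]

theorem exists_lp_sq_norm_sub_eq_of_mem_sqEuclideanCone {D : ι × ι → ℝ}
    (hD : D ∈ sqEuclideanCone ι) :
    ∃ F : ι → lp (fun _ : ℕ => ℝ) 2, ∀ x y, ‖F x - F y‖ ^ 2 = D (x, y) := by
  classical
  rcases isEmpty_or_nonempty ι with hι | ⟨⟨x₀⟩⟩
  · exact ⟨isEmptyElim, isEmptyElim⟩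
  obtain ⟨F, hF⟩ := exists_lp_inner_eq_of_posSemidef (posSemidef_of_mem_sqEuclideanCone hD x₀)
  refine ⟨F, fun x y => ?_⟩
  rw [norm_sub_sq_real, ← real_inner_self_eq_norm_sq, ← real_inner_self_eq_norm_sq, hF, hF, hF]
  simp only [of_apply, hD.2.1]
  ring

theorem sum_mul_mul_norm_sub_sq_of_sum_eq_zero {E : Type*} [NormedAddCommGroup E]
    [InnerProductSpace ℝ E] (f : ι → E) {b : ι → ℝ} (hb : ∑ x, b x = 0) :
    ∑ x, ∑ y, b x * b y * ‖f x - f y‖ ^ 2 = -2 * ‖∑ x, b x • f x‖ ^ 2 := by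
  rw [← real_inner_self_eq_norm_sq]
  calc ∑ x, ∑ y, b x * b y * ‖f x - f y‖ ^ 2
      = ∑ x, ∑ y, (b x * ‖f x‖ ^ 2 * b y + b x * (b y * ‖f y‖ ^ 2)
          - 2 * (b x * (b y * ⟪f x, f y⟫))) := by
        refine Finset.sum_congr rfl fun x _ => Finset.sum_congr rfl fun y _ => ?_
        rw [norm_sub_sq_real]; ring
    _ = (∑ x, b x * ‖f x‖ ^ 2) * ∑ y, b y + (∑ x, b x) * (∑ y, b y * ‖f y‖ ^ 2)
          - 2 * ⟪∑ x, b x • f x, ∑ y, b y • f y⟫ := by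
        simp_rw [Finset.sum_mul_sum, sum_inner, inner_sum, real_inner_smul_left,
          real_inner_smul_right, Finset.mul_sum, ← Finset.sum_add_distrib,
          ← Finset.sum_sub_distrib]
    _ = -2 * ⟪∑ x, b x • f x, ∑ y, b y • f y⟫ := by rw [hb]; ring

theorem sq_norm_sub_mem_sqEuclideanCone {E : Type*} [NormedAddCommGroup E]
    [InnerProductSpace ℝ E] (f : ι → E) :
    (fun p : ι × ι => ‖f p.1 - f p.2‖ ^ 2) ∈ sqEuclideanCone ι := by
  refine ⟨fun x y => by simp only [norm_sub_rev], fun x => by simp, fun b hb => ?_⟩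
  rw [sum_mul_mul_norm_sub_sq_of_sum_eq_zero f hb]
  nlinarith [sq_nonneg ‖∑ x, b x • f x‖]

end SqEuclidean

theorem geometric_hahn_banach_compact_properCone {E : Type*} [TopologicalSpace E]
    [AddCommGroup E] [Module ℝ E] [IsTopologicalAddGroup E] [ContinuousSMul ℝ E]
    [LocallyConvexSpace ℝ E] {s : Set E} (hs₁ : Convex ℝ s) (hs₂ : IsCompact s)
    (K : ProperCone ℝ E) (disj : Disjoint s K) :
    ∃ f : StrongDual ℝ E, (∀ a ∈ s, f a < 0) ∧ ∀ b ∈ K, 0 ≤ f b := by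
  obtain ⟨f, u, v, hs, huv, hK⟩ :=
    geometric_hahn_banach_compact_closed hs₁ hs₂ K.convex K.isClosed disj
  have hv : v < 0 := by simpa using hK 0 K.zero_mem
  refine ⟨f, fun a ha => (hs a ha).trans (huv.trans hv), fun b hb => ?_⟩
  by_contra! hb'
  have := hK _ (K.smul_mem hb (div_pos_of_neg_of_neg hv hb').le)
  rw [map_smul, smul_eq_mul, div_mul_cancel₀ _ hb'.ne] at this
  exact lt_irrefl _ this

theorem LinearMap.exists_symm_apply_eq_sum_mul {ι : Type*} [Fintype ι]
    (φ : (ι × ι → ℝ) →ₗ[ℝ] ℝ) :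
    ∃ c : ι × ι → ℝ, (∀ x y, c (x, y) = c (y, x)) ∧
      ∀ D : ι × ι → ℝ, (∀ x y, D (x, y) = D (y, x)) → φ D = ∑ p, c p * D p := by
  classical
  set w : ι × ι → ℝ := fun p => φ fun q => if p = q then 1 else 0
  refine ⟨fun p => (w p + w p.swap) / 2, fun x y => by simp [add_comm], fun D hD => ?_⟩
  have hswap : ∑ p, w p.swap * D p = ∑ p, w p * D p := by
    rw [← (Equiv.prodComm ι ι).sum_comp]
    exact Finset.sum_congr rfl fun ⟨x, y⟩ _ => by simp [hD y x]
  rw [LinearMap.pi_apply_eq_sum_univ φ D]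
  simp only [smul_eq_mul, add_div, add_mul, Finset.sum_add_distrib, div_mul_eq_mul_div,
    ← Finset.sum_div, hswap]
  simp only [w, mul_comm (D _)]
  ring

theorem sum_mul_ite_neg_eq {α : Type*} [Fintype α] (c lo hi : α → ℝ) :
    ∑ p, c p * (if c p < 0 then lo p else hi p) = ∑ p, ((c p)⁺ * hi p - (c p)⁻ * lo p) := by
  refine Finset.sum_congr rfl fun p _ => ?_
  split_ifs with h
  · rw [posPart_eq_zero.2 h.le, negPart_eq_neg.2 h.le]; ring
  · rw [posPart_eq_self.2 (not_lt.1 h), negPart_eq_zero.2 (not_lt.1 h)]; ring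

theorem sum_indicator_posPart_nonneg {α : Type*} [Fintype α] (s : Set α) (c : α → ℝ) :
    0 ≤ ∑ p, s.indicator (fun p => (c p)⁺) p :=
  Finset.sum_nonneg fun p _ => indicator_nonneg (fun _ _ => posPart_nonneg _) p

theorem sum_indicator_negPart_mul_le {α : Type*} [Fintype α] {c d : α → ℝ} (A B : Set α)
    {K : ℝ} (hd₀ : ∀ p, 0 ≤ d p) (hdK : ∀ p, d p ≤ K) (hcd : 0 ≤ ∑ p, c p * d p) :
    ∑ p, B.indicator (fun p => (c p)⁻) p * d p ≤
      ∑ p, A.indicator (fun p => (c p)⁺) p * d p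
        + K * ∑ p, Aᶜ.indicator (fun p => (c p)⁺) p := by
  calc ∑ p, B.indicator (fun p => (c p)⁻) p * d p
      ≤ ∑ p, (c p)⁻ * d p := Finset.sum_le_sum fun p _ => mul_le_mul_of_nonneg_right
        (indicator_le_self' (fun _ _ => negPart_nonneg _) p) (hd₀ p)
    _ ≤ ∑ p, (c p)⁺ * d p := by
        have : ∑ p, c p * d p = ∑ p, (c p)⁺ * d p - ∑ p, (c p)⁻ * d p := by
          simp_rw [← Finset.sum_sub_distrib, ← sub_mul, posPart_sub_negPart]
        linarith
    _ = ∑ p, A.indicator (fun p => (c p)⁺) p * d p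
          + ∑ p, Aᶜ.indicator (fun p => (c p)⁺) p * d p := by
        rw [← Finset.sum_add_distrib]
        simp_rw [← add_mul, indicator_self_add_compl_apply]
    _ ≤ _ := by
        rw [Finset.mul_sum]
        refine add_le_add le_rfl (Finset.sum_le_sum fun p _ => ?_)
        rw [mul_comm K]
        exact mul_le_mul_of_nonneg_left (hdK p)
          (indicator_nonneg (fun _ _ => posPart_nonneg _) p)

theorem sq_norm_sub_le_four_mul_iSup {ι E : Type*} [Finite ι] [SeminormedAddCommGroup E]
    (f : ι → E) (x y : ι) : ‖f x - f y‖ ^ 2 ≤ 4 * ⨆ z, ‖f z‖ ^ 2 := by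
  have hbdd := (Set.finite_range fun z => ‖f z‖ ^ 2).bddAbove
  have hx := le_ciSup hbdd x
  have hy := le_ciSup hbdd y
  have := norm_sub_le (f x) (f y)
  nlinarith [norm_nonneg (f x - f y), norm_nonneg (f x), norm_nonneg (f y),
    sq_nonneg (‖f x‖ - ‖f y‖)]

theorem sq_div_mul_div_sub_le_div {S₁ S₂ M lam₁ lam₂ lam₃ τ₁ τ₂ τ₃ : ℝ} (hS₁ : 0 ≤ S₁)
    (hM : 0 ≤ M) (hlam₁ : 0 < lam₁) (hlam₂ : 0 < lam₂) (hlam₃ : 0 ≤ lam₃) (hτ₂ : 0 < τ₂)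
    (hτ₃ : 0 < τ₃) (hS : S₂ ≤ S₁ + 4 * M * lam₃)
    (hgap : τ₁ ^ 2 * lam₁ + τ₃ ^ 2 * lam₃ ≤ τ₂ ^ 2 * lam₂) :
    (τ₁ / τ₂) ^ 2 * (S₂ / lam₂) - (2 * τ₁ / τ₃) ^ 2 * M ≤ S₁ / lam₁ := by
  have h₁ : τ₁ ^ 2 / (τ₂ ^ 2 * lam₂) ≤ 1 / lam₁ := by
    rw [div_le_div_iff₀ (by positivity) hlam₁]
    nlinarith [mul_nonneg (sq_nonneg τ₃) hlam₃]
  have h₃ : τ₁ ^ 2 * lam₃ / (τ₂ ^ 2 * lam₂) ≤ τ₁ ^ 2 / τ₃ ^ 2 := by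
    rw [div_le_div_iff₀ (by positivity) (by positivity)]
    nlinarith [mul_nonneg (sq_nonneg τ₁) hlam₁.le, sq_nonneg τ₁]
  rw [sub_le_iff_le_add]
  calc (τ₁ / τ₂) ^ 2 * (S₂ / lam₂) = τ₁ ^ 2 / (τ₂ ^ 2 * lam₂) * S₂ := by field_simp
    _ ≤ τ₁ ^ 2 / (τ₂ ^ 2 * lam₂) * (S₁ + 4 * M * lam₃) := by gcongr
    _ = τ₁ ^ 2 / (τ₂ ^ 2 * lam₂) * S₁ + 4 * M * (τ₁ ^ 2 * lam₃ / (τ₂ ^ 2 * lam₂)) := by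
        ring
    _ ≤ 1 / lam₁ * S₁ + 4 * M * (τ₁ ^ 2 / τ₃ ^ 2) := by gcongr
    _ = S₁ / lam₁ + (2 * τ₁ / τ₃) ^ 2 * M := by ring

section ThresholdMap

variable {X : Type*} [PseudoMetricSpace X]

def IsThresholdMap {E : Type*} [SeminormedAddCommGroup E] (s₁ s₂ τ₁ τ₂ τ₃ : ℝ) (f : X → E) :
    Prop :=
  (∀ x y, dist x y ≤ s₁ → ‖f x - f y‖ ≤ τ₁) ∧ (∀ x y, s₂ ≤ dist x y → τ₂ ≤ ‖f x - f y‖) ∧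
    ∀ x y, ‖f x - f y‖ ≤ τ₃

variable (X) in
def closePairs (s : ℝ) : Set (X × X) := {p | dist p.1 p.2 ≤ s}

variable (X) in
def farPairs (s : ℝ) : Set (X × X) := {p | s ≤ dist p.1 p.2}

variable (X) in
def admissibleProfiles (s₁ s₂ τ₁ τ₂ τ₃ : ℝ) : Set (X × X → ℝ) :=
  Icc (fun p => if s₂ ≤ dist p.1 p.2 then τ₂ ^ 2 else 0)
    (fun p => if dist p.1 p.2 ≤ s₁ then τ₁ ^ 2 else τ₃ ^ 2)

theorem isThresholdMap_of_mem_admissibleProfiles {E : Type*} [SeminormedAddCommGroup E]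
    {s₁ s₂ τ₁ τ₂ τ₃ : ℝ} (hτ₁ : 0 ≤ τ₁) (hτ₂ : 0 ≤ τ₂) (hτ₁₃ : τ₁ ≤ τ₃) {f : X → E}
    (hf : (fun p : X × X => ‖f p.1 - f p.2‖ ^ 2) ∈ admissibleProfiles X s₁ s₂ τ₁ τ₂ τ₃) :
    IsThresholdMap s₁ s₂ τ₁ τ₂ τ₃ f := by
  have hτ₃ : 0 ≤ τ₃ := hτ₁.trans hτ₁₃
  refine ⟨fun x y hxy => ?_, fun x y hxy => ?_, fun x y => ?_⟩
  · have := hf.2 (x, y)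
    simp only [hxy, if_true] at this
    exact (pow_le_pow_iff_left₀ (norm_nonneg _) hτ₁ two_ne_zero).1 this
  · have := hf.1 (x, y)
    simp only [hxy, if_true] at this
    exact (pow_le_pow_iff_left₀ hτ₂ (norm_nonneg _) two_ne_zero).1 this
  · have := hf.2 (x, y)
    refine (pow_le_pow_iff_left₀ (norm_nonneg _) hτ₃ two_ne_zero).1 (this.trans ?_)
    dsimp only
    split_ifs
    exacts [pow_le_pow_left₀ hτ₁ hτ₁₃ 2, le_rfl]

variable (c : X × X → ℝ) in
noncomputable def closeWeight (s₁ ε : ℝ) : X × X → ℝ :=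
  (closePairs X s₁).indicator (fun p => (c p)⁺) + (diagonal X).indicator fun _ => ε

variable (c : X × X → ℝ) in
noncomputable def farWeight (s₂ : ℝ) : X × X → ℝ :=
  (farPairs X s₂).indicator fun p => (c p)⁻

variable {c : X × X → ℝ} {s₁ s₂ ε : ℝ}

theorem closeWeight_nonneg (hε : 0 ≤ ε) (p : X × X) : 0 ≤ closeWeight c s₁ ε p :=
  add_nonneg (indicator_nonneg (fun _ _ => posPart_nonneg _) p)
    (indicator_nonneg (fun _ _ => hε) p)

theorem farWeight_nonneg (p : X × X) : 0 ≤ farWeight c s₂ p :=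
  indicator_nonneg (fun _ _ => negPart_nonneg _) p

theorem closeWeight_symm (hc : ∀ x y, c (x, y) = c (y, x)) (x y : X) :
    closeWeight c s₁ ε (x, y) = closeWeight c s₁ ε (y, x) := by
  classical
  simp only [closeWeight, Pi.add_apply, indicator_apply, closePairs, mem_ofPred_eq,
    mem_diagonal_iff, dist_comm x y, hc x y, eq_comm]

theorem farWeight_symm (hc : ∀ x y, c (x, y) = c (y, x)) (x y : X) :
    farWeight c s₂ (x, y) = farWeight c s₂ (y, x) := by
  classical
  simp only [farWeight, indicator_apply, farPairs, mem_ofPred_eq, dist_comm x y, hc x y]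

theorem dist_le_of_closeWeight_ne_zero (hs₁ : 0 ≤ s₁) {p : X × X}
    (hp : closeWeight c s₁ ε p ≠ 0) : dist p.1 p.2 ≤ s₁ := by
  by_contra hfar
  have hoff : p ∉ diagonal X := fun hdiag => hfar <| by
    rw [mem_diagonal_iff.1 hdiag, dist_self]; exact hs₁
  have hclose : p ∉ closePairs X s₁ := hfar
  simp [closeWeight, indicator_of_notMem hoff, indicator_of_notMem hclose] at hp

theorem le_dist_of_farWeight_ne_zero {p : X × X} (hp : farWeight c s₂ p ≠ 0) :
    s₂ ≤ dist p.1 p.2 :=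
  mem_of_indicator_ne_zero (s := farPairs X s₂) hp

variable [Fintype X]

theorem disjoint_admissibleProfiles_sqEuclideanCone {τ₁ τ₂ τ₃ : ℝ} (hτ₁ : 0 ≤ τ₁)
    (hτ₂ : 0 ≤ τ₂) (hτ₁₃ : τ₁ ≤ τ₃)
    (hno : ¬∃ f : X → lp (fun _ : ℕ => ℝ) 2, IsThresholdMap s₁ s₂ τ₁ τ₂ τ₃ f) :
    Disjoint (admissibleProfiles X s₁ s₂ τ₁ τ₂ τ₃) (sqEuclideanCone X) := by
  refine Set.disjoint_left.2 fun D hP hK => ?_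
  obtain ⟨F, hF⟩ := exists_lp_sq_norm_sub_eq_of_mem_sqEuclideanCone hK
  have hD : (fun p : X × X => ‖F p.1 - F p.2‖ ^ 2) = D := funext fun p => hF p.1 p.2
  exact hno ⟨F, isThresholdMap_of_mem_admissibleProfiles hτ₁ hτ₂ hτ₁₃ (hD ▸ hP)⟩

theorem exists_symm_separating_of_not_exists_isThresholdMap {τ₁ τ₂ τ₃ : ℝ} (hτ₁ : 0 ≤ τ₁)
    (hτ₂ : 0 ≤ τ₂) (hτ₁₃ : τ₁ ≤ τ₃)
    (hno : ¬∃ f : X → lp (fun _ : ℕ => ℝ) 2, IsThresholdMap s₁ s₂ τ₁ τ₂ τ₃ f) :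
    ∃ c : X × X → ℝ, (∀ x y, c (x, y) = c (y, x)) ∧
      (∀ f : X → lp (fun _ : ℕ => ℝ) 2, 0 ≤ ∑ p, c p * ‖f p.1 - f p.2‖ ^ 2) ∧
      ∀ l ∈ admissibleProfiles X s₁ s₂ τ₁ τ₂ τ₃, (∀ x y, l (x, y) = l (y, x)) →
        ∑ p, c p * l p < 0 := by
  classical
  obtain ⟨φ, hP, hK⟩ := geometric_hahn_banach_compact_properCone (convex_Icc _ _)
    isCompact_Icc _ (disjoint_admissibleProfiles_sqEuclideanCone hτ₁ hτ₂ hτ₁₃ hno)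
  obtain ⟨c, hc, hφ⟩ := LinearMap.exists_symm_apply_eq_sum_mul (φ : (X × X → ℝ) →ₗ[ℝ] ℝ)
  refine ⟨c, hc, fun f => ?_, fun l hl hl_symm => ?_⟩
  · have hd := sq_norm_sub_mem_sqEuclideanCone f
    rw [← hφ _ hd.1]
    exact hK _ hd
  · rw [← hφ _ hl_symm]
    exact hP l hl

theorem sum_closeWeight :
    ∑ p, closeWeight c s₁ ε p =
      ∑ p, (closePairs X s₁).indicator (fun p => (c p)⁺) p + ε * Fintype.card X := by
  classical
  simp [closeWeight, Finset.sum_add_distrib, Fintype.sum_prod_type _, indicator_apply, mul_comm]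

theorem sum_closeWeight_mul {d : X × X → ℝ} (hd : ∀ x, d (x, x) = 0) :
    ∑ p, closeWeight c s₁ ε p * d p =
      ∑ p, (closePairs X s₁).indicator (fun p => (c p)⁺) p * d p := by
  refine Finset.sum_congr rfl fun p _ => ?_
  by_cases hp : p ∈ diagonal X
  · rw [← Prod.mk.eta (p := p), mem_diagonal_iff.1 hp, hd]; simp
  · simp [closeWeight, indicator_of_notMem hp]

theorem sum_closeWeight_pos [Nonempty X] (hε : 0 < ε) : 0 < ∑ p, closeWeight c s₁ ε p := by
  rw [sum_closeWeight]
  exact add_pos_of_nonneg_of_pos (sum_indicator_posPart_nonneg _ _)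
    (mul_pos hε (Nat.cast_pos.2 Fintype.card_pos))

/-- Mass on the diagonal is free for `closeWeight`, so it can absorb the whole gap. -/
theorem exists_sq_mul_sum_closeWeight_add_eq [Nonempty X] {τ₁ τ₂ τ₃ : ℝ} (hτ₁ : 0 < τ₁)
    (hgap : τ₁ ^ 2 * ∑ p, (closePairs X s₁).indicator (fun p => (c p)⁺) p
      + τ₃ ^ 2 * ∑ p, (closePairs X s₁)ᶜ.indicator (fun p => (c p)⁺) p
      < τ₂ ^ 2 * ∑ p, farWeight c s₂ p) :
    ∃ ε, 0 < ε ∧ τ₁ ^ 2 * ∑ p, closeWeight c s₁ ε p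
      + τ₃ ^ 2 * ∑ p, (closePairs X s₁)ᶜ.indicator (fun p => (c p)⁺) p
      = τ₂ ^ 2 * ∑ p, farWeight c s₂ p := by
  have hn : (0 : ℝ) < Fintype.card X := Nat.cast_pos.2 Fintype.card_pos
  simp_rw [sum_closeWeight]
  generalize ∑ p, (closePairs X s₁).indicator (fun p => (c p)⁺) p = C at hgap ⊢
  generalize ∑ p, (closePairs X s₁)ᶜ.indicator (fun p => (c p)⁺) p = R at hgap ⊢
  generalize ∑ p, farWeight c s₂ p = F at hgap ⊢
  refine ⟨(τ₂ ^ 2 * F - (τ₁ ^ 2 * C + τ₃ ^ 2 * R)) / (τ₁ ^ 2 * Fintype.card X),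
    div_pos (sub_pos.2 hgap) (by positivity), ?_⟩
  field_simp
  ring

theorem sq_mul_add_sq_mul_lt_sq_mul_sum_farWeight {τ₁ τ₂ τ₃ : ℝ} (hs : s₁ < s₂) (hτ₂ : 0 ≤ τ₂)
    (hτ₂₃ : τ₂ ≤ τ₃) (hc : ∀ x y, c (x, y) = c (y, x))
    (hP : ∀ l ∈ admissibleProfiles X s₁ s₂ τ₁ τ₂ τ₃, (∀ x y, l (x, y) = l (y, x)) →
      ∑ p, c p * l p < 0) :
    τ₁ ^ 2 * ∑ p, (closePairs X s₁).indicator (fun p => (c p)⁺) p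
      + τ₃ ^ 2 * ∑ p, (closePairs X s₁)ᶜ.indicator (fun p => (c p)⁺) p
      < τ₂ ^ 2 * ∑ p, farWeight c s₂ p := by
  classical
  set lo : X × X → ℝ := fun p => if s₂ ≤ dist p.1 p.2 then τ₂ ^ 2 else 0
  set hi : X × X → ℝ := fun p => if dist p.1 p.2 ≤ s₁ then τ₁ ^ 2 else τ₃ ^ 2
  have hlo_hi : ∀ p, lo p ≤ hi p := fun p => by
    simp only [lo, hi]
    split_ifs <;> first | positivity | linarith | exact pow_le_pow_left₀ hτ₂ hτ₂₃ 2
  -- the vertex of the box at which `l ↦ ∑ p, c p * l p` is largest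
  have hmem : (fun p => if c p < 0 then lo p else hi p) ∈ Icc lo hi := by
    refine ⟨fun p => ?_, fun p => ?_⟩ <;> by_cases h : c p < 0 <;> simp [h, hlo_hi p]
  have hvertex := hP _ hmem fun x y => by simp only [lo, hi, hc x y, dist_comm x y]
  have hsum : ∑ p, ((c p)⁺ * hi p - (c p)⁻ * lo p) =
      τ₁ ^ 2 * ∑ p, (closePairs X s₁).indicator (fun p => (c p)⁺) p
        + τ₃ ^ 2 * ∑ p, (closePairs X s₁)ᶜ.indicator (fun p => (c p)⁺) p
        - τ₂ ^ 2 * ∑ p, farWeight c s₂ p := by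
    simp only [Finset.mul_sum, ← Finset.sum_add_distrib, ← Finset.sum_sub_distrib]
    refine Finset.sum_congr rfl fun p _ => ?_
    simp only [lo, hi, farWeight, indicator_apply, closePairs, farPairs, mem_ofPred_eq,
      mem_compl_iff]
    split_ifs <;> ring
  rw [sum_mul_ite_neg_eq, hsum] at hvertex
  linarith

theorem sq_div_mul_sum_farWeight_sub_le {E : Type*} [SeminormedAddCommGroup E]
    {τ₁ τ₂ τ₃ : ℝ} (hτ₂ : 0 < τ₂) (hτ₃ : 0 < τ₃) (hclose : 0 < ∑ p, closeWeight c s₁ ε p)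
    (hfar : 0 < ∑ p, farWeight c s₂ p)
    (hgap : τ₁ ^ 2 * ∑ p, closeWeight c s₁ ε p
      + τ₃ ^ 2 * ∑ p, (closePairs X s₁)ᶜ.indicator (fun p => (c p)⁺) p
      ≤ τ₂ ^ 2 * ∑ p, farWeight c s₂ p)
    (f : X → E) (hf : 0 ≤ ∑ p, c p * ‖f p.1 - f p.2‖ ^ 2) :
    (τ₁ / τ₂) ^ 2 * ∑ p, farWeight c s₂ p / (∑ q, farWeight c s₂ q) * ‖f p.1 - f p.2‖ ^ 2
        - (2 * τ₁ / τ₃) ^ 2 * (⨆ x, ‖f x‖ ^ 2)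
      ≤ ∑ p, closeWeight c s₁ ε p / (∑ q, closeWeight c s₁ ε q) * ‖f p.1 - f p.2‖ ^ 2 := by
  have hS := sum_indicator_negPart_mul_le (closePairs X s₁) (farPairs X s₂)
    (fun p => by positivity) (fun p => sq_norm_sub_le_four_mul_iSup f p.1 p.2) hf
  simp_rw [div_mul_eq_mul_div, ← Finset.sum_div]
  rw [sum_closeWeight_mul fun x => by simp]
  exact sq_div_mul_div_sub_le_div
    (Finset.sum_nonneg fun p _ => mul_nonneg (indicator_nonneg (fun _ _ => posPart_nonneg _) p)
      (sq_nonneg _))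
    (Real.iSup_nonneg fun _ => sq_nonneg _) hclose hfar
    (sum_indicator_posPart_nonneg _ _) hτ₂ hτ₃ hS hgap

end ThresholdMap

theorem stmt_14 (X' : Type) [Fintype X'] [MetricSpace X'] [Nonempty X']
    (s₁ s₂ τ₁ τ₂ τ₃ : ℝ) (hs : 0 < s₁) (hs' : s₁ < s₂)
    (hτ0 : 0 < τ₁) (hτ1 : τ₁ < τ₂) (hτ2 : τ₂ < τ₃)
    (hno : ¬ ∃ f : X' → lp (fun _ : ℕ => ℝ) 2,
      (∀ x y : X', dist x y ≤ s₁ → ‖f x - f y‖ ≤ τ₁) ∧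
      (∀ x y : X', s₂ ≤ dist x y → τ₂ ≤ ‖f x - f y‖) ∧
      (∀ x y : X', ‖f x - f y‖ ≤ τ₃)) :
    ∃ μ₁ μ₂ : X' × X' → ℝ,
      (∀ p, 0 ≤ μ₁ p) ∧ (∀ p, 0 ≤ μ₂ p) ∧
      (∑ p : X' × X', μ₁ p) = 1 ∧ (∑ p : X' × X', μ₂ p) = 1 ∧
      (∀ x y : X', μ₁ (x, y) = μ₁ (y, x)) ∧
      (∀ x y : X', μ₂ (x, y) = μ₂ (y, x)) ∧
      (∀ p : X' × X', μ₁ p ≠ 0 → dist p.1 p.2 ≤ s₁) ∧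
      (∀ p : X' × X', μ₂ p ≠ 0 → s₂ ≤ dist p.1 p.2) ∧
      ∀ f : X' → lp (fun _ : ℕ => ℝ) 2,
        (τ₁ / τ₂) ^ 2 * ∑ p : X' × X', μ₂ p * ‖f p.1 - f p.2‖ ^ 2
          - (2 * τ₁ / τ₃) ^ 2 * (⨆ x : X', ‖f x‖ ^ 2)
        ≤ ∑ p : X' × X', μ₁ p * ‖f p.1 - f p.2‖ ^ 2 := by
  have hτ₂ : 0 < τ₂ := hτ0.trans hτ1
  have hτ₃ : 0 < τ₃ := hτ₂.trans hτ2
  obtain ⟨c, hc, hc_sq, hc_P⟩ :=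
    exists_symm_separating_of_not_exists_isThresholdMap hτ0.le hτ₂.le (hτ1.trans hτ2).le hno
  have hgap := sq_mul_add_sq_mul_lt_sq_mul_sum_farWeight hs' hτ₂.le hτ2.le hc hc_P
  have hfar : 0 < ∑ p, farWeight c s₂ p := by
    nlinarith [mul_nonneg (sq_nonneg τ₁) (sum_indicator_posPart_nonneg (closePairs X' s₁) c),
      mul_nonneg (sq_nonneg τ₃) (sum_indicator_posPart_nonneg (closePairs X' s₁)ᶜ c), sq_nonneg τ₂]
  obtain ⟨ε, hε, hΛ⟩ := exists_sq_mul_sum_closeWeight_add_eq hτ0 hgap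
  have hclose : 0 < ∑ p, closeWeight c s₁ ε p := sum_closeWeight_pos hε
  refine ⟨fun p => closeWeight c s₁ ε p / ∑ q, closeWeight c s₁ ε q,
    fun p => farWeight c s₂ p / ∑ q, farWeight c s₂ q,
    fun p => div_nonneg (closeWeight_nonneg hε.le p) hclose.le,
    fun p => div_nonneg (farWeight_nonneg p) hfar.le,
    by rw [← Finset.sum_div, div_self hclose.ne'], by rw [← Finset.sum_div, div_self hfar.ne'],
    fun x y => congrArg (· / _) (closeWeight_symm hc x y),
    fun x y => congrArg (· / _) (farWeight_symm hc x y),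
    fun p hp => dist_le_of_closeWeight_ne_zero hs.le (div_ne_zero_iff.1 hp).1,
    fun p hp => le_dist_of_farWeight_ne_zero (div_ne_zero_iff.1 hp).1,
    fun f => sq_div_mul_sum_farWeight_sub_le hτ₂ hτ₃ hclose hfar hΛ.le f (hc_sq f)⟩
end

section
/- Let X be a metric space and fix 0 < s₁ < s₂ and 0 < τ₁ < τ₂ < τ₃. If every finite subset of X admits an (s₁,s₂,τ₁,τ₂,τ₃)-threshold map into a Hilbert space, then X itself admits an (s₁,s₂,τ₁,τ₂,τ₃)-threshold map into a Hilbert space. -/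
/-!
Center each finite threshold map at a base point and extend it by `0`, so that all of them take
values in the ball of radius `τ₃`. Their Gram matrices then lie in a compact product of intervals,
and a limit along an ultrafilter refining the net of finite subsets is again positive
semidefinite. By Moore's theorem it is the Gram matrix of a map into a Hilbert space, whose
distances are the limits of the finite ones; the threshold inequalities are closed conditions and
pass to the limit.
-/

open Filter Topology
open scoped InnerProductSpace

universe u

namespace Matrix

variable {n : Type*}

theorem isClosed_setOf_posSemidef {R : Type*} [Ring R] [PartialOrder R] [StarRing R]
    [TopologicalSpace R] [IsTopologicalRing R] [ContinuousStar R] [OrderClosedTopology R]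
    [T2Space R] : IsClosed {M : Matrix n n R | M.PosSemidef} := by
  simp only [PosSemidef, Set.ofPred_and, Set.ofPred_forall]
  refine IsClosed.inter (isClosed_eq (continuous_id.matrix_conjTranspose) continuous_id) ?_
  refine isClosed_iInter fun c => isClosed_le continuous_const ?_
  unfold Finsupp.sum
  fun_prop

theorem posSemidef_gram_real {E : Type*} [SeminormedAddCommGroup E] [InnerProductSpace ℝ E]
    (v : n → E) : (gram ℝ v).PosSemidef := by
  refine ⟨isHermitian_gram ℝ v, fun c => ?_⟩
  have hsum : (c.sum fun i a => c.sum fun j b => star a * gram ℝ v i j * b) =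
      ⟪c.sum fun i a => a • v i, c.sum fun j b => b • v j⟫_ℝ := by
    simp only [Finsupp.sum_inner, Finsupp.inner_sum, real_inner_smul_left, real_inner_smul_right,
      gram_apply, star_trivial]
    exact Finsupp.sum_congr fun i _ => Finsupp.sum_congr fun j _ => by rw [real_inner_comm]; ring
  exact hsum ▸ real_inner_self_nonneg

theorem exists_tendsto_of_abs_le {ι : Type*} (U : Ultrafilter ι) {M : ι → Matrix n n ℝ} {C : ℝ}
    (hM : ∀ i a b, |M i a b| ≤ C) : ∃ K, Tendsto M U (𝓝 K) := by
  have hbox : IsCompact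
      (Set.univ.pi fun _ : n => Set.univ.pi fun _ : n => Set.Icc (-C) C : Set (Matrix n n ℝ)) :=
    isCompact_univ_pi fun _ => isCompact_univ_pi fun _ => isCompact_Icc
  obtain ⟨K, -, hK⟩ := hbox.ultrafilter_le_nhds (U.map M) <|
    le_principal_iff.mpr <| Ultrafilter.mem_map.mpr <| univ_mem' fun i =>
      Set.mem_univ_pi.mpr fun a => Set.mem_univ_pi.mpr fun b => abs_le.mp (hM i a b)
  exact ⟨K, hK⟩

section RKHS

variable {X : Type u}

theorem PosSemidef.map_smul_one {K : Matrix X X ℝ} (hK : K.PosSemidef) :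
    (K.map fun a => a • (1 : ℝ →L[ℝ] ℝ)).PosSemidef := by
  have key := (RKHS.posSemidef_tfae (K := K.map fun a => a • (1 : ℝ →L[ℝ] ℝ))).out 2 0
  refine key.mp ⟨hK.1.map _ fun _ => by simp, fun c => ?_⟩
  have := hK.2 c
  rw [Finsupp.sum_comm] at this
  simpa [mul_comm, mul_left_comm, mul_assoc] using this

theorem PosSemidef.exists_eq_gram {K : Matrix X X ℝ} (hK : K.PosSemidef) :
    ∃ (H : Type u) (_ : NormedAddCommGroup H) (_ : InnerProductSpace ℝ H) (_ : CompleteSpace H)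
      (v : X → H), gram ℝ v = K := by
  have : Fact (K.map fun a => a • (1 : ℝ →L[ℝ] ℝ)).PosSemidef := ⟨hK.map_smul_one⟩
  refine ⟨RKHS.OfKernel (K.map fun a => a • (1 : ℝ →L[ℝ] ℝ)), inferInstance,
    inferInstance, inferInstance, fun x => RKHS.kerFun _ x 1, ext fun x y => ?_⟩
  rw [gram_apply, ← RKHS.kernel_inner, RKHS.OfKernel.kernel_ofKernel]
  simpa using hK.1.apply x y

end RKHS

end Matrix

theorem norm_sub_eq_sqrt_gram {X E : Type*} [SeminormedAddCommGroup E] [InnerProductSpace ℝ E]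
    (v : X → E) (x y : X) :
    ‖v x - v y‖ = √(Matrix.gram ℝ v x x - 2 * Matrix.gram ℝ v x y + Matrix.gram ℝ v y y) := by
  simp only [Matrix.gram_apply, real_inner_self_eq_norm_sq]
  rw [← norm_sub_sq_real, Real.sqrt_sq (norm_nonneg _)]

theorem exists_tendsto_norm_sub_of_norm_le {ι : Type*} (l : Filter ι) {X : Type u}
    {E : ι → Type*} [∀ i, NormedAddCommGroup (E i)] [∀ i, InnerProductSpace ℝ (E i)]
    (g : ∀ i, X → E i) {C : ℝ} (hg : ∀ i x, ‖g i x‖ ≤ C) [l.NeBot] :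
    ∃ (H : Type u) (_ : NormedAddCommGroup H) (_ : InnerProductSpace ℝ H) (_ : CompleteSpace H)
      (v : X → H) (U : Ultrafilter ι), ↑U ≤ l ∧
        ∀ x y, Tendsto (fun i => ‖g i x - g i y‖) U (𝓝 ‖v x - v y‖) := by
  let U := Ultrafilter.of l
  have hbound : ∀ i x y, |Matrix.gram ℝ (g i) x y| ≤ C * C := fun i x y =>
    (abs_real_inner_le_norm _ _).trans <|
      mul_le_mul (hg i x) (hg i y) (norm_nonneg _) ((norm_nonneg _).trans (hg i x))
  obtain ⟨K, hK⟩ := Matrix.exists_tendsto_of_abs_le U hbound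
  have hKpsd : K.PosSemidef := Matrix.isClosed_setOf_posSemidef.mem_of_tendsto hK <|
    Eventually.of_forall fun i => Matrix.posSemidef_gram_real (g i)
  obtain ⟨H, _, _, _, v, rfl⟩ := hKpsd.exists_eq_gram
  refine ⟨H, inferInstance, inferInstance, inferInstance, v, U, Ultrafilter.of_le l, fun x y => ?_⟩
  have hentry : ∀ a b, Tendsto (fun i => Matrix.gram ℝ (g i) a b) U (𝓝 (Matrix.gram ℝ v a b)) :=
    fun a b => tendsto_pi_nhds.mp (tendsto_pi_nhds.mp hK a) b
  simp only [norm_sub_eq_sqrt_gram]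
  exact (((hentry x x).sub ((hentry x y).const_mul 2)).add (hentry y y)).sqrt

section Threshold

variable {X H : Type*} [PseudoMetricSpace X] [SeminormedAddCommGroup H] (s₁ s₂ τ₁ τ₂ τ₃ : ℝ)

structure IsThresholdMap_s15 (f : X → H) : Prop where
  norm_sub_le_of_dist_le : ∀ x y, dist x y ≤ s₁ → ‖f x - f y‖ ≤ τ₁
  le_norm_sub_of_le_dist : ∀ x y, s₂ ≤ dist x y → τ₂ ≤ ‖f x - f y‖
  norm_sub_le : ∀ x y, ‖f x - f y‖ ≤ τ₃

variable {s₁ s₂ τ₁ τ₂ τ₃}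

theorem IsThresholdMap_s15.sub_const {f : X → H} (hf : IsThresholdMap_s15 s₁ s₂ τ₁ τ₂ τ₃ f) (c : H) :
    IsThresholdMap_s15 s₁ s₂ τ₁ τ₂ τ₃ (fun x => f x - c) := by
  have hsub : ∀ x y, f x - c - (f y - c) = f x - f y := fun x y => sub_sub_sub_cancel_right _ _ _
  exact ⟨fun x y h => hsub x y ▸ hf.1 x y h, fun x y h => hsub x y ▸ hf.2 x y h,
    fun x y => hsub x y ▸ hf.3 x y⟩

theorem IsThresholdMap_s15.exists_domRestrict_of_norm_le {s : Set X} {a : X} (ha : a ∈ s)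
    {f : s → H} (hf : IsThresholdMap_s15 s₁ s₂ τ₁ τ₂ τ₃ f) :
    ∃ g : X → H, (∀ x, ‖g x‖ ≤ τ₃) ∧ IsThresholdMap_s15 s₁ s₂ τ₁ τ₂ τ₃ (s.domRestrict g) := by
  classical
  set g : X → H := fun x => if hx : x ∈ s then f ⟨x, hx⟩ - f ⟨a, ha⟩ else 0
  have hg : s.domRestrict g = fun x => f x - f ⟨a, ha⟩ := funext fun x => by
    simp [g, Set.domRestrict_apply, x.2]
  refine ⟨g, fun x => ?_, hg ▸ hf.sub_const _⟩
  by_cases hx : x ∈ s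
  · simpa [g, hx] using hf.norm_sub_le ⟨x, hx⟩ ⟨a, ha⟩
  · simpa [g, hx] using hf.norm_sub_le ⟨a, ha⟩ ⟨a, ha⟩

theorem IsThresholdMap_s15.of_tendsto {ι : Type*} {l : Filter ι} [l.NeBot] {E : ι → Type*}
    [∀ i, SeminormedAddCommGroup (E i)] {s : ι → Set X} {g : ∀ i, X → E i}
    (hg : ∀ i, IsThresholdMap_s15 s₁ s₂ τ₁ τ₂ τ₃ ((s i).domRestrict (g i)))
    (hs : ∀ x, ∀ᶠ i in l, x ∈ s i) {f : X → H}
    (hf : ∀ x y, Tendsto (fun i => ‖g i x - g i y‖) l (𝓝 ‖f x - f y‖)) :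
    IsThresholdMap_s15 s₁ s₂ τ₁ τ₂ τ₃ f := by
  have hpair : ∀ x y, ∀ᶠ i in l, x ∈ s i ∧ y ∈ s i := fun x y => (hs x).and (hs y)
  refine ⟨fun x y hxy => le_of_tendsto (hf x y) ?_, fun x y hxy => ge_of_tendsto (hf x y) ?_,
    fun x y => le_of_tendsto (hf x y) ?_⟩ <;>
  filter_upwards [hpair x y] with i ⟨hx, hy⟩
  · exact (hg i).1 ⟨x, hx⟩ ⟨y, hy⟩ hxy
  · exact (hg i).2 ⟨x, hx⟩ ⟨y, hy⟩ hxy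
  · exact (hg i).3 ⟨x, hx⟩ ⟨y, hy⟩

end Threshold

theorem stmt_15_general (X : Type) [MetricSpace X]
    (s₁ s₂ τ₁ τ₂ τ₃ : ℝ)
    (hfin : ∀ S : Set X, S.Finite →
      ∃ (H : Type) (_ : NormedAddCommGroup H) (_ : InnerProductSpace ℝ H)
        (_ : CompleteSpace H) (f : S → H),
        (∀ x y : S, dist (x : X) (y : X) ≤ s₁ → ‖f x - f y‖ ≤ τ₁) ∧
        (∀ x y : S, s₂ ≤ dist (x : X) (y : X) → τ₂ ≤ ‖f x - f y‖) ∧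
        (∀ x y : S, ‖f x - f y‖ ≤ τ₃)) :
    ∃ (H : Type) (_ : NormedAddCommGroup H) (_ : InnerProductSpace ℝ H)
      (_ : CompleteSpace H) (f : X → H),
      (∀ x y : X, dist x y ≤ s₁ → ‖f x - f y‖ ≤ τ₁) ∧
      (∀ x y : X, s₂ ≤ dist x y → τ₂ ≤ ‖f x - f y‖) ∧
      (∀ x y : X, ‖f x - f y‖ ≤ τ₃) := by
  classical
  rcases isEmpty_or_nonempty X with _ | ⟨⟨x₀⟩⟩
  · exact ⟨ℝ, inferInstance, inferInstance, inferInstance, isEmptyElim,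
      isEmptyElim, isEmptyElim, isEmptyElim⟩
  have hlocal (S : Finset X) : ∃ (H : Type) (_ : NormedAddCommGroup H)
      (_ : InnerProductSpace ℝ H) (g : X → H), (∀ x, ‖g x‖ ≤ τ₃) ∧
        IsThresholdMap_s15 s₁ s₂ τ₁ τ₂ τ₃ (((insert x₀ S : Finset X) : Set X).domRestrict g) := by
    obtain ⟨H, _, _, _, f, hf₁, hf₂, hf₃⟩ := hfin _ (insert x₀ S).finite_toSet
    obtain ⟨g, hg⟩ := IsThresholdMap_s15.exists_domRestrict_of_norm_le
      (Finset.mem_coe.mpr (Finset.mem_insert_self x₀ S)) ⟨hf₁, hf₂, hf₃⟩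
    exact ⟨H, inferInstance, inferInstance, g, hg⟩
  choose E _ _ g hg_norm hg using hlocal
  obtain ⟨H, _, _, _, f, U, hU, hf⟩ := exists_tendsto_norm_sub_of_norm_le atTop g hg_norm
  have hmem (x : X) : ∀ᶠ S in (U : Filter (Finset X)), x ∈ ((insert x₀ S : Finset X) : Set X) :=
    hU <| (eventually_ge_atTop {x}).mono fun S hS =>
      Finset.mem_insert_of_mem (hS (Finset.mem_singleton_self x))
  obtain ⟨h₁, h₂, h₃⟩ := IsThresholdMap_s15.of_tendsto hg hmem hf
  exact ⟨H, inferInstance, inferInstance, inferInstance, f, h₁, h₂, h₃⟩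

theorem stmt_15 (X : Type) [MetricSpace X]
    (s₁ s₂ τ₁ τ₂ τ₃ : ℝ) (hs : 0 < s₁) (hs' : s₁ < s₂)
    (hτ0 : 0 < τ₁) (hτ1 : τ₁ < τ₂) (hτ2 : τ₂ < τ₃)
    (hfin : ∀ S : Set X, S.Finite →
      ∃ (H : Type) (_ : NormedAddCommGroup H) (_ : InnerProductSpace ℝ H)
        (_ : CompleteSpace H) (f : S → H),
        (∀ x y : S, dist (x : X) (y : X) ≤ s₁ → ‖f x - f y‖ ≤ τ₁) ∧
        (∀ x y : S, s₂ ≤ dist (x : X) (y : X) → τ₂ ≤ ‖f x - f y‖) ∧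
        (∀ x y : S, ‖f x - f y‖ ≤ τ₃)) :
    ∃ (H : Type) (_ : NormedAddCommGroup H) (_ : InnerProductSpace ℝ H)
      (_ : CompleteSpace H) (f : X → H),
      (∀ x y : X, dist x y ≤ s₁ → ‖f x - f y‖ ≤ τ₁) ∧
      (∀ x y : X, s₂ ≤ dist x y → τ₂ ≤ ‖f x - f y‖) ∧
      (∀ x y : X, ‖f x - f y‖ ≤ τ₃) :=
  stmt_15_general X s₁ s₂ τ₁ τ₂ τ₃ hfin
end
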